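/- Let Λ be a σ-finite measure on 𝒫 satisfying conditions (1.4) and (1.5). Then the function x ↦ Σ_{k≥1} x_k e^{θ x_k} 1_{|x_k|<1} − x₁ 1_{|x₁|<1} (terms with x_k = −∞ contributing 0) is well defined, with the series absolutely convergent for Λ-almost every x, and is Λ-integrable: ∫_𝒫 | Σ_{k≥1} x_k e^{θ x_k} 1_{|x_k|<1} − x₁ 1_{|x₁|<1} | Λ(dx) < ∞. -/

import Mathlib

open MeasureTheory ENNReal Filter

noncomputable section

/-- The space `𝒫` of nonincreasing sequences in `[-∞, ∞)` tending to `-∞`,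
equipped (as a subtype of `ℕ → EReal`) with the σ-algebra generated by the coordinate maps. -/
def calP : Set (ℕ → EReal) :=
  {x | Antitone x ∧ (∀ n, x n ≠ ⊤) ∧ Tendsto x atTop (nhds ⊥)}

/-- `e^{θ y}`, with the convention that it is `0` when `y = -∞`, even for `θ = 0`. -/
def eexp (θ : ℝ) (y : EReal) : ℝ≥0∞ :=
  if y = ⊥ then 0 else ENNReal.ofReal (Real.exp (θ * y.toReal))

/-- `⟨x, e_θ⟩ = Σ_{n ≥ 1} e^{θ x_n}` (the sequence is indexed from `0` in Lean). -/
def ip (θ : ℝ) (x : ℕ → EReal) : ℝ≥0∞ := ∑' n, eexp θ (x n)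

/-- Condition (1.4): `∫ (1 ∧ x₁²) Λ(dx) < ∞`, with `1 ∧ x₁² = 1` when `x₁ = -∞`. -/
def cond14 (Λ : Measure calP) : Prop :=
  ∫⁻ x : calP, (if x.1 0 = ⊥ then 1
    else 1 ⊓ ENNReal.ofReal ((x.1 0).toReal ^ 2)) ∂Λ < ∞

/-- Condition (1.5): `∫ (1_{x₁>1} e^{θ x₁} + Σ_{k≥2} e^{θ x_k}) Λ(dx) < ∞`. -/
def cond15 (θ : ℝ) (Λ : Measure calP) : Prop :=
  ∫⁻ x : calP, ((if (1 : EReal) < x.1 0 then eexp θ (x.1 0) else 0)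
    + ∑' k, eexp θ (x.1 (k + 1))) ∂Λ < ∞

/-- `y ↦ y e^{θ y} 1_{|y| < 1}`, with the convention that the term is `0` when `y = -∞`. -/
def xexpIn (θ : ℝ) (y : EReal) : ℝ :=
  if y ≠ ⊥ ∧ |y.toReal| < 1 then y.toReal * Real.exp (θ * y.toReal) else 0

/-- `y ↦ y 1_{|y| < 1}`, with the convention that the term is `0` when `y = -∞`. -/
def xIn (y : EReal) : ℝ := if y ≠ ⊥ ∧ |y.toReal| < 1 then y.toReal else 0

/-! The series is split into its first term and its tail. Each tail term satisfies
`|x_k e^{θ x_k} 1_{|x_k|<1}| ≤ e^{θ x_k}`, so the tail is dominated by `Σ_{k≥2} e^{θ x_k}`,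
which is integrable by (1.5) and hence finite a.e.; this gives the absolute convergence.
The first term minus `x₁ 1_{|x₁|<1}` is `x₁ (e^{θ x₁} - 1) 1_{|x₁|<1}`, and
`|e^s - 1| ≤ |s| e^{|s|}` bounds it by `|θ| e^{|θ|} (1 ∧ x₁²)`, integrable by (1.4). -/

lemma Real.abs_exp_sub_one_le_abs_mul_exp_abs (s : ℝ) :
    |Real.exp s - 1| ≤ |s| * Real.exp |s| := by
  have h := Complex.norm_exp_sub_sum_le_norm_mul_exp (s : ℂ) 1
  simp only [Finset.range_one, Finset.sum_singleton, pow_zero, Nat.factorial_zero,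
    Nat.cast_one, div_one, pow_one, Complex.norm_real, Real.norm_eq_abs] at h
  rwa [← Complex.ofReal_exp, ← Complex.ofReal_one, ← Complex.ofReal_sub, Complex.norm_real,
    Real.norm_eq_abs] at h

/-- The integrand `1 ∧ y²` of condition (1.4). -/
def oneInfSq (y : EReal) : ℝ≥0∞ :=
  if y = ⊥ then 1 else 1 ⊓ ENNReal.ofReal (y.toReal ^ 2)

lemma measurable_eexp (θ : ℝ) : Measurable (eexp θ) :=
  Measurable.ite (measurableSet_singleton ⊥) measurable_const
    (ENNReal.measurable_ofReal.comp
      (Real.measurable_exp.comp (measurable_const.mul measurable_ereal_toReal)))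

lemma measurable_oneInfSq : Measurable oneInfSq :=
  Measurable.ite (measurableSet_singleton ⊥) measurable_const
    (measurable_const.inf (ENNReal.measurable_ofReal.comp (measurable_ereal_toReal.pow_const 2)))

lemma enorm_xexpIn_le_eexp (θ : ℝ) (y : EReal) : ‖xexpIn θ y‖ₑ ≤ eexp θ y := by
  rw [Real.enorm_eq_ofReal_abs, xexpIn, eexp]
  split_ifs with hy hbot
  · exact absurd hbot hy.1
  · refine ENNReal.ofReal_le_ofReal ?_
    rw [abs_mul, Real.abs_exp]
    exact mul_le_of_le_one_left (Real.exp_pos _).le hy.2.le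
  all_goals simp

lemma enorm_xexpIn_sub_xIn_le (θ : ℝ) (y : EReal) :
    ‖xexpIn θ y - xIn y‖ₑ ≤ ENNReal.ofReal (|θ| * Real.exp |θ|) * oneInfSq y := by
  rw [xexpIn, xIn]
  split_ifs with hy
  · set t := y.toReal
    have ht : |t| ≤ 1 := hy.2.le
    have hsq : oneInfSq y = ENNReal.ofReal (t ^ 2) := by
      rw [oneInfSq, if_neg hy.1, inf_eq_right, ENNReal.ofReal_le_one, ← sq_abs]
      nlinarith [abs_nonneg t]
    have hθt : |θ| * |t| ≤ |θ| := mul_le_of_le_one_right (abs_nonneg θ) ht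
    rw [hsq, ← ENNReal.ofReal_mul (by positivity), Real.enorm_eq_ofReal_abs]
    refine ENNReal.ofReal_le_ofReal ?_
    calc |t * Real.exp (θ * t) - t| = |t| * |Real.exp (θ * t) - 1| := by
          rw [← abs_mul, mul_sub_one]
      _ ≤ |t| * (|θ * t| * Real.exp |θ * t|) :=
          mul_le_mul_of_nonneg_left (Real.abs_exp_sub_one_le_abs_mul_exp_abs _) (abs_nonneg t)
      _ ≤ |t| * (|θ| * |t| * Real.exp |θ|) := by
          rw [abs_mul θ t]; gcongr
      _ = |θ| * Real.exp |θ| * t ^ 2 := by rw [← sq_abs t]; ring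
  · simp

lemma summable_xexpIn_and_enorm_le (θ : ℝ) (x : ℕ → EReal)
    (hx : ∑' k, eexp θ (x (k + 1)) ≠ ∞) :
    (Summable fun k => xexpIn θ (x k)) ∧
      ‖(∑' k, xexpIn θ (x k)) - xIn (x 0)‖ₑ ≤
        ENNReal.ofReal (|θ| * Real.exp |θ|) * oneInfSq (x 0) + ∑' k, eexp θ (x (k + 1)) := by
  have htail_le : ∑' k, ‖xexpIn θ (x (k + 1))‖ₑ ≤ ∑' k, eexp θ (x (k + 1)) :=
    ENNReal.tsum_le_tsum fun k => enorm_xexpIn_le_eexp θ _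
  have hsum : Summable fun k => xexpIn θ (x k) :=
    (summable_nat_add_iff 1).mp (Summable.of_enorm (ne_top_of_le_ne_top hx htail_le))
  refine ⟨hsum, ?_⟩
  rw [hsum.tsum_eq_zero_add, add_sub_right_comm]
  exact (enorm_add_le _ _).trans
    (add_le_add (enorm_xexpIn_sub_xIn_le θ _) (enorm_tsum_le_tsum_enorm.trans htail_le))

theorem stmt8_general (θ : ℝ) (Λ : Measure calP)
    (h14 : cond14 Λ) (h15 : cond15 θ Λ) :
    (∀ᵐ x : calP ∂Λ, Summable fun k => xexpIn θ (x.1 k)) ∧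
      ∫⁻ x : calP, ENNReal.ofReal |(∑' k, xexpIn θ (x.1 k)) - xIn (x.1 0)| ∂Λ < ∞ := by
  set C := ENNReal.ofReal (|θ| * Real.exp |θ|)
  set tail : calP → ℝ≥0∞ := fun x => ∑' k, eexp θ (x.1 (k + 1))
  have hcoord (k : ℕ) : Measurable fun x : calP => x.1 k :=
    (measurable_pi_apply k).comp measurable_subtype_coe
  have htail_meas : Measurable tail :=
    Measurable.tsum fun k => (measurable_eexp θ).comp (hcoord (k + 1))
  have htail_int : ∫⁻ x, tail x ∂Λ < ∞ :=
    (lintegral_mono fun x => le_add_self).trans_lt h15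
  have hbound := (ae_lt_top htail_meas htail_int.ne).mono fun x hx =>
    summable_xexpIn_and_enorm_le θ x.1 hx.ne
  refine ⟨hbound.mono fun x hx => hx.1, ?_⟩
  simp_rw [← Real.enorm_eq_ofReal_abs]
  calc _ ≤ ∫⁻ x, C * oneInfSq (x.1 0) + tail x ∂Λ :=
        lintegral_mono_ae (hbound.mono fun x hx => hx.2)
    _ = C * ∫⁻ x, oneInfSq (x.1 0) ∂Λ + ∫⁻ x, tail x ∂Λ := by
        rw [lintegral_add_right _ htail_meas]
        exact congrArg (· + _) (lintegral_const_mul _ (measurable_oneInfSq.comp (hcoord 0)))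
    _ < ∞ := ENNReal.add_lt_top.mpr ⟨ENNReal.mul_lt_top ENNReal.ofReal_lt_top h14, htail_int⟩

/-- the function `x ↦ Σ_{k≥1} x_k e^{θ x_k} 1_{|x_k|<1} - x₁ 1_{|x₁|<1}` is
well defined, the series being absolutely convergent for `Λ`-a.e. `x`, and it is
`Λ`-integrable. -/
theorem stmt8 (θ : ℝ) (hθ : 0 ≤ θ) (Λ : Measure calP) [SigmaFinite Λ]
    (h14 : cond14 Λ) (h15 : cond15 θ Λ) :
    (∀ᵐ x : calP ∂Λ, Summable fun k => xexpIn θ (x.1 k)) ∧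
      ∫⁻ x : calP, ENNReal.ofReal |(∑' k, xexpIn θ (x.1 k)) - xIn (x.1 0)| ∂Λ < ∞ :=
  stmt8_general θ Λ h14 h15
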